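/- Let f : ℝ³ → ℝ be a C² function and define, for smooth F, G : ℝ³ → ℝ, the bracket {F,G}_f(x) := ∇f(x) · (∇F(x) × ∇G(x)). Then for every such f, the bracket {·,·}_f is a Poisson bracket; in particular it satisfies the Jacobi identity: for all smooth F, G, H : ℝ³ → ℝ and all x ∈ ℝ³, {{F,G}_f,H}_f(x) + {{G,H}_f,F}_f(x) + {{H,F}_f,G}_f(x) = 0. -/

import Mathlib

open Matrix
/-- The Euclidean gradient of `F : ℝ³ → ℝ`. -/
noncomputable def euclGrad (F : (Fin 3 → ℝ) → ℝ) (x : Fin 3 → ℝ) : Fin 3 → ℝ :=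
  fun i => fderiv ℝ F x (Pi.single i 1)
/-- The Nambu-type bracket `{F,G}_f(x) = ∇f(x) · (∇F(x) × ∇G(x))` on `ℝ³`. -/
noncomputable def nambuBracket (f F G : (Fin 3 → ℝ) → ℝ) (x : Fin 3 → ℝ) : ℝ :=
  euclGrad f x ⬝ᵥ crossProduct (euclGrad F x) (euclGrad G x)

private lemma hasFDerivAt_pd (φ : (Fin 3 → ℝ) → ℝ) (hφ : ContDiff ℝ 2 φ)
    (x v : Fin 3 → ℝ) :
    HasFDerivAt (fun y => fderiv ℝ φ y v)
      ((ContinuousLinearMap.apply ℝ ℝ v).comp (fderiv ℝ (fderiv ℝ φ) x)) x := by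
  have h1 : ContDiff ℝ 1 (fderiv ℝ φ) := hφ.fderiv_right (by norm_num)
  have hD : HasFDerivAt (fderiv ℝ φ) (fderiv ℝ (fderiv ℝ φ) x) x :=
    (h1.differentiable one_ne_zero x).hasFDerivAt
  exact ((ContinuousLinearMap.apply ℝ ℝ v).hasFDerivAt).comp x hD

private lemma nambu_eq (f P Q : (Fin 3 → ℝ) → ℝ) :
    nambuBracket f P Q = fun y =>
      fderiv ℝ f y (Pi.single 0 1) *
        (fderiv ℝ P y (Pi.single 1 1) * fderiv ℝ Q y (Pi.single 2 1) -
         fderiv ℝ P y (Pi.single 2 1) * fderiv ℝ Q y (Pi.single 1 1)) +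
      fderiv ℝ f y (Pi.single 1 1) *
        (fderiv ℝ P y (Pi.single 2 1) * fderiv ℝ Q y (Pi.single 0 1) -
         fderiv ℝ P y (Pi.single 0 1) * fderiv ℝ Q y (Pi.single 2 1)) +
      fderiv ℝ f y (Pi.single 2 1) *
        (fderiv ℝ P y (Pi.single 0 1) * fderiv ℝ Q y (Pi.single 1 1) -
         fderiv ℝ P y (Pi.single 1 1) * fderiv ℝ Q y (Pi.single 0 1)) := by
  funext y
  simp [nambuBracket, euclGrad, cross_apply, dotProduct, Fin.sum_univ_three]

private lemma fderiv_nambu (f P Q : (Fin 3 → ℝ) → ℝ) (hf : ContDiff ℝ 2 f)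
    (hP : ContDiff ℝ 2 P) (hQ : ContDiff ℝ 2 Q) (x w : Fin 3 → ℝ) :
    fderiv ℝ (nambuBracket f P Q) x w =
      fderiv ℝ (fderiv ℝ f) x w (Pi.single 0 1) *
        (fderiv ℝ P x (Pi.single 1 1) * fderiv ℝ Q x (Pi.single 2 1) -
         fderiv ℝ P x (Pi.single 2 1) * fderiv ℝ Q x (Pi.single 1 1)) +
      fderiv ℝ f x (Pi.single 0 1) *
        (fderiv ℝ (fderiv ℝ P) x w (Pi.single 1 1) * fderiv ℝ Q x (Pi.single 2 1) +
         fderiv ℝ P x (Pi.single 1 1) * fderiv ℝ (fderiv ℝ Q) x w (Pi.single 2 1) -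
         fderiv ℝ (fderiv ℝ P) x w (Pi.single 2 1) * fderiv ℝ Q x (Pi.single 1 1) -
         fderiv ℝ P x (Pi.single 2 1) * fderiv ℝ (fderiv ℝ Q) x w (Pi.single 1 1)) +
      fderiv ℝ (fderiv ℝ f) x w (Pi.single 1 1) *
        (fderiv ℝ P x (Pi.single 2 1) * fderiv ℝ Q x (Pi.single 0 1) -
         fderiv ℝ P x (Pi.single 0 1) * fderiv ℝ Q x (Pi.single 2 1)) +
      fderiv ℝ f x (Pi.single 1 1) *
        (fderiv ℝ (fderiv ℝ P) x w (Pi.single 2 1) * fderiv ℝ Q x (Pi.single 0 1) +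
         fderiv ℝ P x (Pi.single 2 1) * fderiv ℝ (fderiv ℝ Q) x w (Pi.single 0 1) -
         fderiv ℝ (fderiv ℝ P) x w (Pi.single 0 1) * fderiv ℝ Q x (Pi.single 2 1) -
         fderiv ℝ P x (Pi.single 0 1) * fderiv ℝ (fderiv ℝ Q) x w (Pi.single 2 1)) +
      fderiv ℝ (fderiv ℝ f) x w (Pi.single 2 1) *
        (fderiv ℝ P x (Pi.single 0 1) * fderiv ℝ Q x (Pi.single 1 1) -
         fderiv ℝ P x (Pi.single 1 1) * fderiv ℝ Q x (Pi.single 0 1)) +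
      fderiv ℝ f x (Pi.single 2 1) *
        (fderiv ℝ (fderiv ℝ P) x w (Pi.single 0 1) * fderiv ℝ Q x (Pi.single 1 1) +
         fderiv ℝ P x (Pi.single 0 1) * fderiv ℝ (fderiv ℝ Q) x w (Pi.single 1 1) -
         fderiv ℝ (fderiv ℝ P) x w (Pi.single 1 1) * fderiv ℝ Q x (Pi.single 0 1) -
         fderiv ℝ P x (Pi.single 1 1) * fderiv ℝ (fderiv ℝ Q) x w (Pi.single 0 1)) := by
  have h : ∀ (φ : (Fin 3 → ℝ) → ℝ), ContDiff ℝ 2 φ → ∀ (i : Fin 3),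
      HasFDerivAt (fun y => fderiv ℝ φ y (Pi.single i 1))
        ((ContinuousLinearMap.apply ℝ ℝ ((Pi.single i 1 : Fin 3 → ℝ))).comp
          (fderiv ℝ (fderiv ℝ φ) x)) x :=
    fun φ hφ i => hasFDerivAt_pd φ hφ x _
  have H := (((h f hf 0).mul (((h P hP 1).mul (h Q hQ 2)).sub ((h P hP 2).mul (h Q hQ 1)))).add
      ((h f hf 1).mul (((h P hP 2).mul (h Q hQ 0)).sub ((h P hP 0).mul (h Q hQ 2))))).add
      ((h f hf 2).mul (((h P hP 0).mul (h Q hQ 1)).sub ((h P hP 1).mul (h Q hQ 0))))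
  have hEq := H.fderiv
  simp only [Pi.mul_def, Pi.add_def, Pi.sub_def] at hEq
  rw [nambu_eq f P Q]
  rw [show (fun y =>
      fderiv ℝ f y (Pi.single 0 1) *
        (fderiv ℝ P y (Pi.single 1 1) * fderiv ℝ Q y (Pi.single 2 1) -
         fderiv ℝ P y (Pi.single 2 1) * fderiv ℝ Q y (Pi.single 1 1)) +
      fderiv ℝ f y (Pi.single 1 1) *
        (fderiv ℝ P y (Pi.single 2 1) * fderiv ℝ Q y (Pi.single 0 1) -
         fderiv ℝ P y (Pi.single 0 1) * fderiv ℝ Q y (Pi.single 2 1)) +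
      fderiv ℝ f y (Pi.single 2 1) *
        (fderiv ℝ P y (Pi.single 0 1) * fderiv ℝ Q y (Pi.single 1 1) -
         fderiv ℝ P y (Pi.single 1 1) * fderiv ℝ Q y (Pi.single 0 1))) = _ from rfl, hEq]
  simp only [ContinuousLinearMap.add_apply, ContinuousLinearMap.smul_apply,
    ContinuousLinearMap.sub_apply, ContinuousLinearMap.coe_comp', Function.comp_apply,
    ContinuousLinearMap.apply_apply, smul_eq_mul]
  ring

set_option maxHeartbeats 2000000 in
/-- For any `C²` function `f : ℝ³ → ℝ`, the bracket
`{F,G}_f = ∇f · (∇F × ∇G)` satisfies the Jacobi identity, hence is a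
Poisson bracket. -/
theorem stmt_10 (f : (Fin 3 → ℝ) → ℝ) (hf : ContDiff ℝ 2 f)
    (F G H : (Fin 3 → ℝ) → ℝ)
    (hF : ContDiff ℝ (⊤ : ℕ∞) F) (hG : ContDiff ℝ (⊤ : ℕ∞) G) (hH : ContDiff ℝ (⊤ : ℕ∞) H)
    (x : Fin 3 → ℝ) :
    nambuBracket f (nambuBracket f F G) H x +
      nambuBracket f (nambuBracket f G H) F x +
      nambuBracket f (nambuBracket f H F) G x = 0 := by
  have hF2 : ContDiff ℝ 2 F := hF.of_le (by exact WithTop.coe_le_coe.mpr le_top)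
  have hG2 : ContDiff ℝ 2 G := hG.of_le (by exact WithTop.coe_le_coe.mpr le_top)
  have hH2 : ContDiff ℝ 2 H := hH.of_le (by exact WithTop.coe_le_coe.mpr le_top)
  have hsf := (hf.contDiffAt (x := x)).isSymmSndFDerivAt (by simp [minSmoothness_of_isRCLikeNormedField])
  have hsF := (hF2.contDiffAt (x := x)).isSymmSndFDerivAt (by simp [minSmoothness_of_isRCLikeNormedField])
  have hsG := (hG2.contDiffAt (x := x)).isSymmSndFDerivAt (by simp [minSmoothness_of_isRCLikeNormedField])
  have hsH := (hH2.contDiffAt (x := x)).isSymmSndFDerivAt (by simp [minSmoothness_of_isRCLikeNormedField])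
  simp only [nambuBracket, euclGrad, cross_apply, dotProduct, Fin.sum_univ_three,
    Matrix.cons_val_zero, Matrix.cons_val_one, Matrix.head_cons, Matrix.cons_val_two,
    Matrix.tail_cons]
  rw [fderiv_nambu f F G hf hF2 hG2 x, fderiv_nambu f F G hf hF2 hG2 x,
    fderiv_nambu f F G hf hF2 hG2 x, fderiv_nambu f G H hf hG2 hH2 x,
    fderiv_nambu f G H hf hG2 hH2 x, fderiv_nambu f G H hf hG2 hH2 x,
    fderiv_nambu f H F hf hH2 hF2 x, fderiv_nambu f H F hf hH2 hF2 x,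
    fderiv_nambu f H F hf hH2 hF2 x]
  rw [hsf (Pi.single 1 1) (Pi.single 0 1), hsf (Pi.single 2 1) (Pi.single 0 1),
    hsf (Pi.single 2 1) (Pi.single 1 1),
    hsF (Pi.single 1 1) (Pi.single 0 1), hsF (Pi.single 2 1) (Pi.single 0 1),
    hsF (Pi.single 2 1) (Pi.single 1 1),
    hsG (Pi.single 1 1) (Pi.single 0 1), hsG (Pi.single 2 1) (Pi.single 0 1),
    hsG (Pi.single 2 1) (Pi.single 1 1),
    hsH (Pi.single 1 1) (Pi.single 0 1), hsH (Pi.single 2 1) (Pi.single 0 1),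
    hsH (Pi.single 2 1) (Pi.single 1 1)]
  ring
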